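/- arXiv:1205.1206 — 4 statements merged into one kernel-verified Lean document; each statement's English description precedes it below -/
import Mathlib

section
/- Let f, g : ℝ² → ℝ be smooth with g_s(0,0) = 0 and with nonvanishing Jacobian f_s(0,0)·g_t(0,0) − f_t(0,0)·g_s(0,0) ≠ 0 (hence f_s(0,0) ≠ 0 and g_t(0,0) ≠ 0), let ε ∈ {1,−1}, and define G(u,x,y) = g(u, x² + ε y²). Then: (a) the origin is a degenerate critical point of G (the Hessian matrix of G at the origin has determinant zero) if and only if g_ss(0,0) = 0; and (b) if θ : ℝ → ℝ is twice differentiable near f(0,0) and satisfies θ(f(u,0)) = g(u,0) for all u near 0, then deriv θ (f(0,0)) = 0 and deriv (deriv θ) (f(0,0)) = g_ss(0,0)/f_s(0,0)². Consequently the origin is a degenerate critical point of G if and only if the graphic curve u ↦ (f(u,0), g(u,0)) has a horizontal inflection point at u = 0. -/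
/-!
The fold map `φ_ε` has derivative `(u, x, y) ↦ (u, 0)` at the origin and its second derivative
only points in the `t`-direction, so the Hessian of `g ∘ φ_ε` at the origin is
`diag(g_ss, 2 g_t, 2ε g_t)`, with determinant `4ε g_ss g_t²`; as `g_t ≠ 0` this vanishes iff
`g_ss = 0`. Differentiating `θ (f (u, 0)) = g (u, 0)` twice gives `θ' f_s = g_s` and
`θ'' f_s² + θ' f_ss = g_ss`, so `g_s = 0` and `f_s ≠ 0` force `θ' = 0` and `θ'' = g_ss / f_s²`.
-/

open Filter Topology

def stdBasis3 : Fin 3 → ℝ × ℝ × ℝ := ![(1, 0, 0), (0, 1, 0), (0, 0, 1)]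

noncomputable def hessian3 (G : ℝ × ℝ × ℝ → ℝ) (p : ℝ × ℝ × ℝ) :
    Matrix (Fin 3) (Fin 3) ℝ :=
  Matrix.of fun i j =>
    fderiv ℝ (fun q => fderiv ℝ G q (stdBasis3 j)) p (stdBasis3 i)

theorem ContDiff.differentiable_fderiv_apply {E F : Type*} [NormedAddCommGroup E]
    [NormedSpace ℝ E] [NormedAddCommGroup F] [NormedSpace ℝ F] {h : E → F}
    (hh : ContDiff ℝ 2 h) (v : E) : Differentiable ℝ (fun q => fderiv ℝ h q v) :=
  ((hh.fderiv_right (m := 1) (by norm_num)).clm_apply contDiff_const).differentiable one_ne_zero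

section Slice

variable {E F : Type*} [NormedAddCommGroup E] [NormedSpace ℝ E]
  [NormedAddCommGroup F] [NormedSpace ℝ F] {h : ℝ × E → F} {c : E}

theorem hasDerivAt_comp_prodMk_const {u : ℝ} (hh : DifferentiableAt ℝ h (u, c)) :
    HasDerivAt (fun s => h (s, c)) (fderiv ℝ h (u, c) (1, 0)) u :=
  hh.hasFDerivAt.comp_hasDerivAt u ((hasDerivAt_id u).prodMk (hasDerivAt_const u c))

theorem deriv_comp_prodMk_const (hh : Differentiable ℝ h) :
    deriv (fun s => h (s, c)) = fun s => fderiv ℝ h (s, c) (1, 0) :=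
  funext fun _ => (hasDerivAt_comp_prodMk_const (hh _)).deriv

theorem hasDerivAt_deriv_comp_prodMk_const {u : ℝ} (hh : ContDiff ℝ 2 h) :
    HasDerivAt (deriv fun s => h (s, c))
      (fderiv ℝ (fun q => fderiv ℝ h q (1, 0)) (u, c) (1, 0)) u := by
  rw [deriv_comp_prodMk_const (hh.differentiable two_ne_zero)]
  exact hasDerivAt_comp_prodMk_const (hh.differentiable_fderiv_apply _ _)

end Slice

theorem ContinuousLinearMap.apply_prodMk_eq {F : Type*} [NormedAddCommGroup F] [NormedSpace ℝ F]
    (L : ℝ × ℝ →L[ℝ] F) (a b : ℝ) : L (a, b) = a • L (1, 0) + b • L (0, 1) := by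
  rw [← map_smul, ← map_smul, ← map_add]; simp

section Graph

variable {θ a b : ℝ → ℝ} {t : ℝ}

theorem deriv_eventuallyEq_of_comp_eventuallyEq (hθ : ∀ᶠ z in 𝓝 (a t), DifferentiableAt ℝ θ z)
    (ha : ∀ᶠ s in 𝓝 t, DifferentiableAt ℝ a s) (hab : θ ∘ a =ᶠ[𝓝 t] b) :
    deriv b =ᶠ[𝓝 t] fun s => deriv θ (a s) * deriv a s := by
  have hθa : ∀ᶠ s in 𝓝 t, DifferentiableAt ℝ θ (a s) :=
    ha.self_of_nhds.continuousAt.eventually hθ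
  filter_upwards [hab.deriv, hθa, ha] with s hs hθs has
  rw [← hs, deriv_comp s hθs has]

theorem deriv_deriv_of_comp_eventuallyEq (hθ : ∀ᶠ z in 𝓝 (a t), DifferentiableAt ℝ θ z)
    (hθ' : DifferentiableAt ℝ (deriv θ) (a t)) (ha : ∀ᶠ s in 𝓝 t, DifferentiableAt ℝ a s)
    (ha' : DifferentiableAt ℝ (deriv a) t) (hab : θ ∘ a =ᶠ[𝓝 t] b) :
    deriv (deriv b) t =
      deriv (deriv θ) (a t) * deriv a t ^ 2 + deriv θ (a t) * deriv (deriv a) t := by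
  rw [(deriv_eventuallyEq_of_comp_eventuallyEq hθ ha hab).deriv_eq]
  exact ((hθ'.hasDerivAt.comp t ha.self_of_nhds.hasDerivAt).mul ha'.hasDerivAt).deriv.trans
    (by rw [Function.comp_apply]; ring)

theorem deriv_eq_zero_and_deriv_deriv_eq_of_comp_eventuallyEq
    (hθ : ∀ᶠ z in 𝓝 (a t), DifferentiableAt ℝ θ z)
    (hθ' : DifferentiableAt ℝ (deriv θ) (a t)) (ha : ∀ᶠ s in 𝓝 t, DifferentiableAt ℝ a s)
    (ha' : DifferentiableAt ℝ (deriv a) t) (hab : θ ∘ a =ᶠ[𝓝 t] b)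
    (ha₀ : deriv a t ≠ 0) (hb₀ : deriv b t = 0) :
    deriv θ (a t) = 0 ∧ deriv (deriv θ) (a t) = deriv (deriv b) t / deriv a t ^ 2 := by
  have h₁ : deriv θ (a t) = 0 := by
    have := (deriv_eventuallyEq_of_comp_eventuallyEq hθ ha hab).self_of_nhds
    rw [hb₀, eq_comm, mul_eq_zero] at this
    exact this.resolve_right ha₀
  refine ⟨h₁, ?_⟩
  rw [deriv_deriv_of_comp_eventuallyEq hθ hθ' ha ha' hab, h₁]
  field_simp
  ring

end Graph

def foldMap (ε : ℝ) (p : ℝ × ℝ × ℝ) : ℝ × ℝ := (p.1, p.2.1 ^ 2 + ε * p.2.2 ^ 2)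

theorem fderiv_foldMap_apply (ε : ℝ) (q v : ℝ × ℝ × ℝ) :
    fderiv ℝ (foldMap ε) q v = (v.1, 2 * q.2.1 * v.2.1 + 2 * ε * q.2.2 * v.2.2) := by
  have hx : HasFDerivAt (fun p : ℝ × ℝ × ℝ => p.2.1) _ q :=
    (hasFDerivAt_snd (𝕜 := ℝ) (p := q)).fst
  have hy : HasFDerivAt (fun p : ℝ × ℝ × ℝ => p.2.2) _ q :=
    (hasFDerivAt_snd (𝕜 := ℝ) (p := q)).snd
  have hD : HasFDerivAt (foldMap ε) _ q :=
    hasFDerivAt_fst.prodMk ((hx.pow 2).add ((hy.pow 2).const_mul ε))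
  rw [hD.fderiv]
  simp only [Nat.add_one_sub_one, pow_one, nsmul_eq_mul, Nat.cast_ofNat,
    ContinuousLinearMap.prod_apply, ContinuousLinearMap.coe_fst', add_apply,
    smul_apply, ContinuousLinearMap.comp_apply, ContinuousLinearMap.coe_snd',
    smul_eq_mul, Prod.mk.injEq, add_right_inj, true_and]
  ring

theorem differentiable_foldMap (ε : ℝ) : Differentiable ℝ (foldMap ε) := by
  unfold foldMap; fun_prop

theorem fderiv_comp_foldMap_apply {g : ℝ × ℝ → ℝ} (hg : Differentiable ℝ g) (ε : ℝ)
    (q v : ℝ × ℝ × ℝ) :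
    fderiv ℝ (g ∘ foldMap ε) q v = v.1 * fderiv ℝ g (foldMap ε q) (1, 0)
      + (2 * q.2.1 * v.2.1 + 2 * ε * q.2.2 * v.2.2) * fderiv ℝ g (foldMap ε q) (0, 1) := by
  rw [fderiv_comp q (hg _) (differentiable_foldMap ε q), ContinuousLinearMap.comp_apply,
    fderiv_foldMap_apply, ContinuousLinearMap.apply_prodMk_eq, smul_eq_mul, smul_eq_mul]

theorem fderiv_fderiv_comp_foldMap_apply_zero {g : ℝ × ℝ → ℝ} (hg : ContDiff ℝ 2 g) (ε : ℝ)
    (v w : ℝ × ℝ × ℝ) :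
    fderiv ℝ (fun q => fderiv ℝ (g ∘ foldMap ε) q v) (0, 0, 0) w =
      w.1 * v.1 * fderiv ℝ (fun q => fderiv ℝ g q (1, 0)) (0, 0) (1, 0)
        + 2 * (w.2.1 * v.2.1 + ε * w.2.2 * v.2.2) * fderiv ℝ g (0, 0) (0, 1) := by
  have hφ : foldMap ε (0, 0, 0) = (0, 0) := by simp [foldMap]
  have hpartial : ∀ e : ℝ × ℝ, HasFDerivAt (fun q => fderiv ℝ g (foldMap ε q) e)
      ((fderiv ℝ (fun p => fderiv ℝ g p e) (0, 0)).comp (fderiv ℝ (foldMap ε) (0, 0, 0)))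
      (0, 0, 0) := fun e => by
    have := (hg.differentiable_fderiv_apply e (foldMap ε (0, 0, 0))).hasFDerivAt.comp (0, 0, 0)
      (differentiable_foldMap ε (0, 0, 0)).hasFDerivAt
    rwa [hφ] at this
  have hx : HasFDerivAt (fun p : ℝ × ℝ × ℝ => p.2.1) _ (0, 0, 0) :=
    (hasFDerivAt_snd (𝕜 := ℝ) (p := (0, 0, 0))).fst
  have hy : HasFDerivAt (fun p : ℝ × ℝ × ℝ => p.2.2) _ (0, 0, 0) :=
    (hasFDerivAt_snd (𝕜 := ℝ) (p := (0, 0, 0))).snd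
  have hc := (((hx.const_mul 2).mul_const v.2.1).add (((hy.const_mul (2 * ε)).mul_const v.2.2)))
  have hD : HasFDerivAt (fun q => v.1 * fderiv ℝ g (foldMap ε q) (1, 0)
      + (2 * q.2.1 * v.2.1 + 2 * ε * q.2.2 * v.2.2) * fderiv ℝ g (foldMap ε q) (0, 1))
      _ (0, 0, 0) :=
    ((hpartial (1, 0)).const_mul v.1).add (hc.mul (hpartial (0, 1)))
  rw [funext (fderiv_comp_foldMap_apply (hg.differentiable two_ne_zero) ε · v), hD.fderiv]
  simp only [Pi.add_apply, mul_zero, zero_mul, add_zero, zero_smul, hφ, smul_add, zero_add,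
    add_apply, smul_apply, ContinuousLinearMap.comp_apply,
    fderiv_foldMap_apply, ContinuousLinearMap.apply_prodMk_eq _ w.1, smul_eq_mul,
    ContinuousLinearMap.coe_snd', ContinuousLinearMap.coe_fst']
  ring

theorem hessian3_comp_foldMap_zero {g : ℝ × ℝ → ℝ} (hg : ContDiff ℝ 2 g) (ε : ℝ) :
    hessian3 (g ∘ foldMap ε) (0, 0, 0) = Matrix.diagonal
      ![fderiv ℝ (fun q => fderiv ℝ g q (1, 0)) (0, 0) (1, 0), 2 * fderiv ℝ g (0, 0) (0, 1),
        2 * ε * fderiv ℝ g (0, 0) (0, 1)] := by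
  ext i j
  fin_cases i <;> fin_cases j <;>
    simp [hessian3, stdBasis3, fderiv_fderiv_comp_foldMap_apply_zero hg]

theorem det_hessian3_comp_foldMap_zero {g : ℝ × ℝ → ℝ} (hg : ContDiff ℝ 2 g) (ε : ℝ) :
    (hessian3 (g ∘ foldMap ε) (0, 0, 0)).det =
      4 * ε * fderiv ℝ (fun q => fderiv ℝ g q (1, 0)) (0, 0) (1, 0)
        * fderiv ℝ g (0, 0) (0, 1) ^ 2 := by
  rw [hessian3_comp_foldMap_zero hg, Matrix.det_diagonal, Fin.prod_univ_three]
  simp only [Matrix.cons_val_zero, Matrix.cons_val_one, Matrix.cons_val_two,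
    Matrix.tail_cons, Matrix.head_cons]
  ring

/-- Let `f, g : ℝ² → ℝ` be smooth with `g_s(0,0) = 0` and nonvanishing Jacobian
`f_s g_t − f_t g_s ≠ 0` at the origin (hence `f_s(0,0) ≠ 0` and `g_t(0,0) ≠ 0`), let
`ε = ±1` and `G(u,x,y) = g(u, x² + εy²)`. Then:
(a) the origin is a degenerate critical point of `G` (the Hessian matrix has determinant
zero) iff `g_ss(0,0) = 0`; and
(b) if `θ` is twice differentiable near `f(0,0)` and satisfies `θ(f(u,0)) = g(u,0)` for all
`u` near `0`, then `θ'(f(0,0)) = 0` and `θ''(f(0,0)) = g_ss(0,0)/f_s(0,0)²`; consequently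
degeneracy of the critical point is equivalent to the graphic curve having a horizontal
inflection point. -/
theorem fold_degenerate_iff_inflection (f g : ℝ × ℝ → ℝ)
    (hf : ContDiff ℝ (⊤ : ℕ∞) f) (hg : ContDiff ℝ (⊤ : ℕ∞) g)
    (hgs : fderiv ℝ g (0, 0) (1, 0) = 0)
    (hJ : fderiv ℝ f (0, 0) (1, 0) * fderiv ℝ g (0, 0) (0, 1)
        - fderiv ℝ f (0, 0) (0, 1) * fderiv ℝ g (0, 0) (1, 0) ≠ 0)
    (ε : ℝ) (hε : ε = 1 ∨ ε = -1)
    (G : ℝ × ℝ × ℝ → ℝ)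
    (hG : ∀ u x y : ℝ, G (u, x, y) = g (u, x ^ 2 + ε * y ^ 2)) :
    (fderiv ℝ f (0, 0) (1, 0) ≠ 0 ∧ fderiv ℝ g (0, 0) (0, 1) ≠ 0)
    ∧ ((hessian3 G (0, 0, 0)).det = 0 ↔
        fderiv ℝ (fun q => fderiv ℝ g q (1, 0)) (0, 0) (1, 0) = 0)
    ∧ ∀ θ : ℝ → ℝ,
        (∀ᶠ z in 𝓝 (f (0, 0)), DifferentiableAt ℝ θ z ∧ DifferentiableAt ℝ (deriv θ) z) →
        (∀ᶠ u in 𝓝 (0 : ℝ), θ (f (u, 0)) = g (u, 0)) →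
        deriv θ (f (0, 0)) = 0
        ∧ deriv (deriv θ) (f (0, 0)) =
            fderiv ℝ (fun q => fderiv ℝ g q (1, 0)) (0, 0) (1, 0)
              / (fderiv ℝ f (0, 0) (1, 0)) ^ 2
        ∧ ((hessian3 G (0, 0, 0)).det = 0 ↔ deriv (deriv θ) (f (0, 0)) = 0) := by
  have hfs : fderiv ℝ f (0, 0) (1, 0) ≠ 0 := fun h => hJ (by rw [hgs, h]; ring)
  have hgt : fderiv ℝ g (0, 0) (0, 1) ≠ 0 := fun h => hJ (by rw [hgs, h]; ring)
  have hε₀ : ε ≠ 0 := by rcases hε with rfl | rfl <;> norm_num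
  have hf₂ : ContDiff ℝ 2 f := hf.of_le (WithTop.coe_le_coe.mpr le_top)
  have hg₂ : ContDiff ℝ 2 g := hg.of_le (WithTop.coe_le_coe.mpr le_top)
  have hfd := hf₂.differentiable two_ne_zero
  have hgd := hg₂.differentiable two_ne_zero
  have hdet : (hessian3 G (0, 0, 0)).det = 0 ↔
      fderiv ℝ (fun q => fderiv ℝ g q (1, 0)) (0, 0) (1, 0) = 0 := by
    rw [show G = g ∘ foldMap ε from funext fun p => hG p.1 p.2.1 p.2.2,
      det_hessian3_comp_foldMap_zero hg₂]
    simp [hε₀, hgt]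
  refine ⟨⟨hfs, hgt⟩, hdet, fun θ hθ hcomp => ?_⟩
  obtain ⟨hθ', hθ''⟩ := deriv_eq_zero_and_deriv_deriv_eq_of_comp_eventuallyEq
    (a := fun u => f (u, 0)) (b := fun u => g (u, 0)) (hθ.mono fun _ h => h.1) hθ.self_of_nhds.2
    (.of_forall fun _ => (hasDerivAt_comp_prodMk_const (hfd _)).differentiableAt)
    (hasDerivAt_deriv_comp_prodMk_const hf₂).differentiableAt hcomp
    (by rwa [deriv_comp_prodMk_const hfd]) (by rwa [deriv_comp_prodMk_const hgd])
  rw [(hasDerivAt_deriv_comp_prodMk_const hg₂).deriv, deriv_comp_prodMk_const hfd] at hθ''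
  refine ⟨hθ', hθ'', ?_⟩
  rw [hdet, hθ'', div_eq_zero_iff]
  simp [hfs]
end

section
/- Let g : ℝ² → ℝ be smooth with g_s(0,0) = 0, and define G : ℝ³ → ℝ by G(u,x,y) = g(u, y² + ux − x³). Then the Hessian matrix of G at the origin, with respect to the standard basis of ℝ³, equals [[g_ss(0,0), g_t(0,0), 0], [g_t(0,0), 0, 0], [0, 0, 2·g_t(0,0)]], and its determinant equals −2·g_t(0,0)³. In particular, if g_t(0,0) ≠ 0 then the origin is a non-degenerate critical point of G; thus no cusp point of a stable product map can be a degenerate critical point of either factor function. -/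
open ContinuousLinearMap

section SecondDerivative

variable {𝕜 E F H : Type*} [NontriviallyNormedField 𝕜]
  [NormedAddCommGroup E] [NormedSpace 𝕜 E] [NormedAddCommGroup F] [NormedSpace 𝕜 F]
  [NormedAddCommGroup H] [NormedSpace 𝕜 H]

theorem fderiv_fderiv_apply_const {f : E → F} {p : E} (hf : DifferentiableAt 𝕜 (fderiv 𝕜 f) p)
    (v w : E) : fderiv 𝕜 (fun q => fderiv 𝕜 f q v) p w = fderiv 𝕜 (fderiv 𝕜 f) p w v := by
  simp [fderiv_clm_apply hf (differentiableAt_const v)]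

theorem fderiv_fderiv_comp_apply {g : F → H} {ψ : E → F} {p v : E}
    (hg : Differentiable 𝕜 g) (hψ : Differentiable 𝕜 ψ)
    (hg' : DifferentiableAt 𝕜 (fderiv 𝕜 g) (ψ p))
    (hψ' : DifferentiableAt 𝕜 (fun q => fderiv 𝕜 ψ q v) p) (w : E) :
    fderiv 𝕜 (fun q => fderiv 𝕜 (g ∘ ψ) q v) p w =
      fderiv 𝕜 (fderiv 𝕜 g) (ψ p) (fderiv 𝕜 ψ p w) (fderiv 𝕜 ψ p v) +
        fderiv 𝕜 g (ψ p) (fderiv 𝕜 (fun q => fderiv 𝕜 ψ q v) p w) := by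
  have hchain : (fun q => fderiv 𝕜 (g ∘ ψ) q v) =
      fun q => fderiv 𝕜 g (ψ q) (fderiv 𝕜 ψ q v) := by
    ext q
    rw [fderiv_comp q (hg _) (hψ q), comp_apply]
  rw [hchain, (HasFDerivAt.clm_apply (c := fun q => fderiv 𝕜 g (ψ q))
    (hg'.hasFDerivAt.comp p (hψ p).hasFDerivAt) hψ'.hasFDerivAt).fderiv]
  simp only [add_apply, comp_apply, flip_apply]
  rw [add_comm]

end SecondDerivative

section Cusp

def cuspPsi (q : ℝ × ℝ × ℝ) : ℝ × ℝ := (q.1, q.2.2 ^ 2 + q.1 * q.2.1 - q.2.1 ^ 3)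

@[simp] theorem cuspPsi_zero : cuspPsi 0 = 0 := by
  simp [cuspPsi]

theorem contDiff_cuspPsi : ContDiff ℝ 2 cuspPsi := by
  unfold cuspPsi
  fun_prop

theorem fderiv_cuspPsi_apply (q v : ℝ × ℝ × ℝ) :
    fderiv ℝ cuspPsi q v =
      (v.1, q.2.1 * v.1 + (q.1 - 3 * q.2.1 ^ 2) * v.2.1 + 2 * q.2.2 * v.2.2) := by
  unfold cuspPsi
  rw [DifferentiableAt.fderiv_prodMk (by fun_prop) (by fun_prop)]
  simp (disch := fun_prop) only [fderiv_fun_sub, fderiv_fun_add,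
    fderiv_fun_mul, fderiv_fun_pow, fderiv.fst, fderiv.snd, fderiv_fun_id, prod_apply, sub_apply,
    add_apply, smul_apply, comp_apply, coe_fst', coe_snd', id_apply, smul_eq_mul, nsmul_eq_mul]
  norm_num
  ring

theorem fderiv_cuspPsi_zero_apply (v : ℝ × ℝ × ℝ) : fderiv ℝ cuspPsi 0 v = v.1 • (1, 0) := by
  simp [fderiv_cuspPsi_apply]

theorem fderiv_fderiv_cuspPsi_zero_apply (v w : ℝ × ℝ × ℝ) :
    fderiv ℝ (fun q => fderiv ℝ cuspPsi q v) 0 w =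
      (0, w.2.1 * v.1 + w.1 * v.2.1 + 2 * w.2.2 * v.2.2) := by
  simp only [fderiv_cuspPsi_apply]
  rw [DifferentiableAt.fderiv_prodMk (by fun_prop) (by fun_prop)]
  simp (disch := fun_prop) only [
    fderiv_fun_sub, fderiv_fun_add, fderiv_fun_mul, fderiv_fun_pow, fderiv.fst, fderiv.snd,
    fderiv_fun_id, fderiv_fun_const, prod_apply, sub_apply, add_apply, smul_apply, comp_apply,
    coe_fst', coe_snd', id_apply, smul_eq_mul, nsmul_eq_mul]
  norm_num
  ring

variable {g : ℝ × ℝ → ℝ}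

theorem fderiv_comp_cuspPsi_zero_apply (hg : DifferentiableAt ℝ g 0) (v : ℝ × ℝ × ℝ) :
    fderiv ℝ (g ∘ cuspPsi) 0 v = v.1 * fderiv ℝ g 0 (1, 0) := by
  rw [fderiv_comp 0 (cuspPsi_zero ▸ hg) (contDiff_cuspPsi.differentiable two_ne_zero 0),
    comp_apply, fderiv_cuspPsi_zero_apply, cuspPsi_zero, map_smul, smul_eq_mul]

theorem fderiv_fderiv_comp_cuspPsi_zero_apply (hg : ContDiff ℝ 2 g) (v w : ℝ × ℝ × ℝ) :
    fderiv ℝ (fun q => fderiv ℝ (g ∘ cuspPsi) q v) 0 w =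
      w.1 * v.1 * fderiv ℝ (fun q => fderiv ℝ g q (1, 0)) 0 (1, 0) +
        (w.2.1 * v.1 + w.1 * v.2.1 + 2 * w.2.2 * v.2.2) * fderiv ℝ g 0 (0, 1) := by
  have hg' : Differentiable ℝ (fderiv ℝ g) :=
    (hg.fderiv_right (m := 1) le_rfl).differentiable one_ne_zero
  have hψ' : Differentiable ℝ (fun q => fderiv ℝ cuspPsi q v) :=
    ((contDiff_cuspPsi.fderiv_right (m := 1) le_rfl).differentiable one_ne_zero).clm_apply
      (differentiable_const v)
  have hvert (c : ℝ) : ((0 : ℝ), c) = c • ((0 : ℝ), (1 : ℝ)) := by simp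
  rw [fderiv_fderiv_comp_apply (hg.differentiable two_ne_zero)
      (contDiff_cuspPsi.differentiable two_ne_zero) (hg' _) (hψ' 0),
    fderiv_cuspPsi_zero_apply, fderiv_cuspPsi_zero_apply, fderiv_fderiv_cuspPsi_zero_apply, cuspPsi_zero, fderiv_fderiv_apply_const (hg' 0), hvert]
  simp only [map_smul, smul_apply, smul_eq_mul]
  ring

theorem hessian3_comp_cuspPsi_zero (hg : ContDiff ℝ 2 g) :
    hessian3 (g ∘ cuspPsi) 0 =
      !![fderiv ℝ (fun q => fderiv ℝ g q (1, 0)) 0 (1, 0), fderiv ℝ g 0 (0, 1), 0;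
         fderiv ℝ g 0 (0, 1), 0, 0;
         0, 0, 2 * fderiv ℝ g 0 (0, 1)] := by
  ext i j
  fin_cases i <;> fin_cases j <;>
    simp [hessian3, stdBasis3, fderiv_fderiv_comp_cuspPsi_zero_apply hg]

end Cusp

/-- For smooth `g : ℝ² → ℝ` with `g_s(0,0) = 0` and `G(u,x,y) = g(u, y² + ux − x³)` (the
cusp normal form case), the Hessian matrix of `G` at the origin is
`[[g_ss, g_t, 0], [g_t, 0, 0], [0, 0, 2g_t]]` (entries at `(0,0)`) with determinant
`−2·g_t(0,0)³`; in particular if `g_t(0,0) ≠ 0` then the origin is a non-degenerate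
critical point of `G`. -/
theorem cusp_hessian (g : ℝ × ℝ → ℝ) (hg : ContDiff ℝ (⊤ : ℕ∞) g)
    (hgs : fderiv ℝ g (0, 0) (1, 0) = 0)
    (G : ℝ × ℝ × ℝ → ℝ)
    (hG : ∀ u x y : ℝ, G (u, x, y) = g (u, y ^ 2 + u * x - x ^ 3)) :
    hessian3 G (0, 0, 0) =
      !![fderiv ℝ (fun q => fderiv ℝ g q (1, 0)) (0, 0) (1, 0), fderiv ℝ g (0, 0) (0, 1), 0;
         fderiv ℝ g (0, 0) (0, 1), 0, 0;
         0, 0, 2 * fderiv ℝ g (0, 0) (0, 1)]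
    ∧ (hessian3 G (0, 0, 0)).det = -2 * (fderiv ℝ g (0, 0) (0, 1)) ^ 3
    ∧ (fderiv ℝ g (0, 0) (0, 1) ≠ 0 →
        fderiv ℝ G (0, 0, 0) = 0 ∧ (hessian3 G (0, 0, 0)).det ≠ 0) := by
  obtain rfl : G = g ∘ cuspPsi := funext fun q => hG q.1 q.2.1 q.2.2
  have hg2 : ContDiff ℝ 2 g := hg.of_le (by norm_cast)
  simp only [Prod.mk_zero_zero] at hgs ⊢
  have hdet : (hessian3 (g ∘ cuspPsi) 0).det = -2 * (fderiv ℝ g 0 (0, 1)) ^ 3 := by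
    rw [hessian3_comp_cuspPsi_zero hg2, Matrix.det_fin_three]
    simp [pow_three, mul_comm, mul_left_comm]
  refine ⟨hessian3_comp_cuspPsi_zero hg2, hdet, fun hgt => ⟨?_, by simp [hdet, hgt]⟩⟩
  refine ContinuousLinearMap.ext fun v => ?_
  simp [fderiv_comp_cuspPsi_zero_apply (hg2.differentiable two_ne_zero 0), hgs]
end

section
/- Let a, b ∈ ℝ with b ≠ 0 and consider the real symmetric 3×3 matrix H = [[a, b, 0], [b, 0, 0], [0, 0, 2b]] (the Hessian at the origin of G = g ∘ ψ at a cusp point, with a = g_ss(0,0) and b = g_t(0,0)). Then H has exactly one negative eigenvalue (counted with multiplicity) if b > 0, and exactly two negative eigenvalues if b < 0. Consequently, a non-degenerate critical point of a Morse function located at a cusp point of the product map has Morse index 1 or 2 (never 0 or 3). -/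
/-!
The characteristic polynomial of `H` factors as `(X - 2b)(X² - aX - b²)`. The quadratic factor
has constant term `-b² < 0`, so its two real roots have opposite signs; the sign of `b` only
decides whether the remaining eigenvalue `2b` is negative as well.
-/

open Polynomial

theorem Matrix.IsHermitian.card_filter_eigenvalues {n : Type*} [Fintype n] [DecidableEq n]
    {A : Matrix n n ℝ} (hA : A.IsHermitian) (p : ℝ → Prop) [DecidablePred p] :
    (Finset.univ.filter fun i => p (hA.eigenvalues i)).card =
      Multiset.card (A.charpoly.roots.filter p) := by
  rw [hA.roots_charpoly_eq_eigenvalues, RCLike.ofReal_real_eq_id, Function.id_comp,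
    Multiset.filter_map, Multiset.card_map]
  rfl

theorem Matrix.charpoly_fin_three_block (a b d c : ℝ) :
    (!![a, b, 0; b, d, 0; 0, 0, c] : Matrix (Fin 3) (Fin 3) ℝ).charpoly =
      (X - C c) * (X ^ 2 + C (-(a + d)) * X + C (a * d - b ^ 2)) := by
  rw [Matrix.charpoly, Matrix.det_fin_three]
  simp only [Fin.isValue, Matrix.charmatrix_apply_eq, Matrix.of_apply, Matrix.cons_val',
    Matrix.cons_val_zero, Matrix.cons_val_fin_one, Matrix.cons_val_one, Matrix.cons_val, ne_eq,
    Fin.reduceEq, not_false_eq_true, Matrix.charmatrix_apply_ne, map_zero, neg_zero, mul_zero,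
    sub_zero, zero_mul, add_zero, map_add, map_neg, map_sub, map_mul, map_pow]
  ring

theorem exists_factor_quadratic_of_const_neg {p q : ℝ} (hq : q < 0) :
    ∃ r₁ r₂ : ℝ, r₁ < 0 ∧ 0 < r₂ ∧ X ^ 2 + C p * X + C q = (X - C r₁) * (X - C r₂) := by
  set s := √(p ^ 2 - 4 * q)
  have hs : s ^ 2 = p ^ 2 - 4 * q := Real.sq_sqrt (by nlinarith [sq_nonneg p])
  have hps : |p| < s := (Real.lt_sqrt (abs_nonneg p)).2 (by rw [sq_abs]; linarith)
  refine ⟨(-p - s) / 2, (-p + s) / 2, by linarith [neg_abs_le p], by linarith [le_abs_self p], ?_⟩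
  have hsum : C p = -(C ((-p - s) / 2) + C ((-p + s) / 2)) := by
    rw [← C_add, ← C_neg]; congr 1; ring
  have hprod : C q = C ((-p - s) / 2) * C ((-p + s) / 2) := by
    rw [← C_mul]; congr 1; linear_combination hs / 4
  rw [hsum, hprod]; ring

/-- The real symmetric matrix `H = [[a, b, 0], [b, 0, 0], [0, 0, 2b]]` with `b ≠ 0` (the
Hessian at the origin of a function composed with the cusp normal form, `a = g_ss(0,0)`,
`b = g_t(0,0)`) has exactly one negative eigenvalue (with multiplicity) if `b > 0` and
exactly two if `b < 0`; hence a non-degenerate critical point at a cusp point has Morse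
index `1` or `2`. -/
theorem cusp_hessian_index (a b : ℝ) (hb : b ≠ 0)
    (H : Matrix (Fin 3) (Fin 3) ℝ)
    (hHdef : H = !![a, b, 0; b, 0, 0; 0, 0, 2 * b])
    (hH : H.IsHermitian) :
    (Finset.univ.filter fun i => hH.eigenvalues i < 0).card = if 0 < b then 1 else 2 := by
  obtain ⟨r₁, r₂, hr₁, hr₂, hfactor⟩ :=
    exists_factor_quadratic_of_const_neg (p := -(a + 0)) (q := a * 0 - b ^ 2)
      (by simpa using sq_pos_of_ne_zero hb)
  have hroots : H.charpoly.roots = {2 * b, r₁, r₂} := by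
    rw [hHdef, Matrix.charpoly_fin_three_block, hfactor]
    convert roots_multiset_prod_X_sub_C ({2 * b, r₁, r₂} : Multiset ℝ)
    simp
  rw [hH.card_filter_eigenvalues (· < 0), hroots]
  rcases hb.lt_or_gt with hbneg | hbpos
  · have h2b : 2 * b < 0 := by linarith
    simp [Multiset.filter_singleton, hr₁, hr₂.not_gt, hbneg.not_gt, h2b]
  · simp [hr₁, hr₂.le, hbpos, hbpos.le]
end

section
/- Let f, g : ℝ² → ℝ be smooth with f_s(0,0) ≠ 0, and let γ(x) = (3x², 2x³). Then the slope function x ↦ deriv (g ∘ γ) x / deriv (f ∘ γ) x tends to g_s(0,0)/f_s(0,0) as x → 0 within x ≠ 0. In particular, the tangent line of the image curve x ↦ (f(γ(x)), g(γ(x))) at the cusp x = 0 is horizontal (limit slope zero) if and only if g_s(0,0) = 0, which holds if and only if the origin is a critical point of G(u,x,y) = g(u, y² + ux − x³). -/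
/-!
Along `γ` the chain rule gives `(h ∘ γ)'(x) = 6x · (h_s(γ x) + x · h_t(γ x))`, so the slope of the
graphic is, after cancelling the common factor `6x`, a quotient of functions continuous at `0`
with value `g_s(0,0) / f_s(0,0)`. The cusp map `ψ` has derivative `(u, x, y) ↦ (u, 0)` at the
origin, hence `dG(0) = dg(0) ∘ dψ(0)` vanishes exactly when `g_s(0,0) = 0`.
-/

open Filter Topology

noncomputable def cuspCurve (x : ℝ) : ℝ × ℝ := (3 * x ^ 2, 2 * x ^ 3)

noncomputable def cuspMap (p : ℝ × ℝ × ℝ) : ℝ × ℝ := (p.1, p.2.2 ^ 2 + p.1 * p.2.1 - p.2.1 ^ 3)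

variable {F : Type*} [NormedAddCommGroup F] [NormedSpace ℝ F]

theorem hasDerivAt_cuspCurve (x : ℝ) : HasDerivAt cuspCurve (6 * x, 6 * x ^ 2) x := by
  have h₁ : HasDerivAt (fun x : ℝ => 3 * x ^ 2) (6 * x) x :=
    ((hasDerivAt_pow 2 x).const_mul 3).congr_deriv (by norm_num; ring)
  have h₂ : HasDerivAt (fun x : ℝ => 2 * x ^ 3) (6 * x ^ 2) x :=
    ((hasDerivAt_pow 3 x).const_mul 2).congr_deriv (by norm_num; ring)
  exact h₁.prodMk h₂

theorem deriv_comp_cuspCurve {h : ℝ × ℝ → F} {x : ℝ}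
    (hh : DifferentiableAt ℝ h (cuspCurve x)) :
    deriv (h ∘ cuspCurve) x =
      (6 * x) • (fderiv ℝ h (cuspCurve x) (1, 0) + x • fderiv ℝ h (cuspCurve x) (0, 1)) := by
  rw [(hh.hasFDerivAt.comp_hasDerivAt x (hasDerivAt_cuspCurve x)).deriv]
  have hv : ((6 * x, 6 * x ^ 2) : ℝ × ℝ) = (6 * x) • ((1, 0) + x • (0, 1)) := by
    ext <;> simp; ring
  rw [hv, map_smul, map_add, map_smul]

theorem continuous_fderiv_cuspCurve_add {h : ℝ × ℝ → F} (hh : ContDiff ℝ 1 h) :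
    Continuous fun x : ℝ =>
      fderiv ℝ h (cuspCurve x) (1, 0) + x • fderiv ℝ h (cuspCurve x) (0, 1) := by
  have hγ : Continuous cuspCurve := by unfold cuspCurve; fun_prop
  have hd : Continuous fun x => fderiv ℝ h (cuspCurve x) :=
    (hh.continuous_fderiv one_ne_zero).comp hγ
  exact (hd.clm_apply continuous_const).add (continuous_id.smul (hd.clm_apply continuous_const))

theorem tendsto_deriv_comp_cuspCurve_div {f g : ℝ × ℝ → ℝ} (hf : ContDiff ℝ 1 f)
    (hg : ContDiff ℝ 1 g) (hfs : fderiv ℝ f (0, 0) (1, 0) ≠ 0) :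
    Tendsto (fun x => deriv (g ∘ cuspCurve) x / deriv (f ∘ cuspCurve) x) (𝓝[≠] 0)
      (𝓝 (fderiv ℝ g (0, 0) (1, 0) / fderiv ℝ f (0, 0) (1, 0))) := by
  have hγ0 : cuspCurve 0 = (0, 0) := by simp [cuspCurve]
  have hlim := ((continuous_fderiv_cuspCurve_add hg).tendsto 0).div
    ((continuous_fderiv_cuspCurve_add hf).tendsto 0) (by simpa [hγ0] using hfs)
  simp only [hγ0, zero_smul, add_zero] at hlim
  refine (hlim.mono_left nhdsWithin_le_nhds).congr' ?_
  filter_upwards [self_mem_nhdsWithin] with x hx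
  have h6x : (6 : ℝ) * x ≠ 0 := mul_ne_zero (by norm_num) hx
  rw [deriv_comp_cuspCurve (hg.differentiable one_ne_zero _),
    deriv_comp_cuspCurve (hf.differentiable one_ne_zero _)]
  simp only [smul_eq_mul, Pi.div_apply, mul_div_mul_left _ _ h6x]

theorem hasFDerivAt_cuspMap_zero :
    HasFDerivAt cuspMap ((ContinuousLinearMap.fst ℝ ℝ (ℝ × ℝ)).prod 0) (0, 0, 0) := by
  refine hasFDerivAt_fst.prodMk ?_
  have hyz : HasFDerivAt (𝕜 := ℝ) (fun p : ℝ × ℝ × ℝ => p.2) _ (0, 0, 0) := hasFDerivAt_snd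
  have hx := hyz.fst
  have hy := hyz.snd
  refine (((hy.pow 2).add (hasFDerivAt_fst.mul hx)).sub (hx.pow 3)).congr_fderiv ?_
  ext <;> simp

theorem fderiv_comp_cuspMap_zero_eq_zero_iff {g : ℝ × ℝ → F}
    (hg : DifferentiableAt ℝ g (0, 0)) :
    fderiv ℝ (g ∘ cuspMap) (0, 0, 0) = 0 ↔ fderiv ℝ g (0, 0) (1, 0) = 0 := by
  have hψ0 : cuspMap (0, 0, 0) = (0, 0) := by simp [cuspMap]
  have hG := (hψ0 ▸ hg).hasFDerivAt.comp (0, 0, 0) hasFDerivAt_cuspMap_zero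
  rw [hG.fderiv, hψ0]
  constructor
  · intro h
    simpa using DFunLike.congr_fun h (1, 0, 0)
  · intro h
    refine ContinuousLinearMap.ext fun v => ?_
    have hv : ((v.1, 0) : ℝ × ℝ) = v.1 • (1, 0) := by simp
    simp only [ContinuousLinearMap.comp_apply, ContinuousLinearMap.prod_apply,
      ContinuousLinearMap.coe_fst', zero_apply]
    rw [hv, map_smul, h, smul_zero]

/-- For smooth `f, g : ℝ² → ℝ` with `f_s(0,0) ≠ 0` and the cusp image curve
`γ(x) = (3x², 2x³)`, the slope `(g ∘ γ)'(x)/(f ∘ γ)'(x)` of the image curve tends to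
`g_s(0,0)/f_s(0,0)` as `x → 0` within `x ≠ 0`. In particular, the tangent line of the
graphic at the cusp is horizontal (limit slope zero) iff `g_s(0,0) = 0`, which holds iff
the origin is a critical point of `G(u,x,y) = g(u, y² + ux − x³)`. -/
theorem cusp_tangent_slope (f g : ℝ × ℝ → ℝ)
    (hf : ContDiff ℝ (⊤ : ℕ∞) f) (hg : ContDiff ℝ (⊤ : ℕ∞) g)
    (hfs : fderiv ℝ f (0, 0) (1, 0) ≠ 0)
    (γ : ℝ → ℝ × ℝ) (hγ : ∀ x : ℝ, γ x = (3 * x ^ 2, 2 * x ^ 3))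
    (G : ℝ × ℝ × ℝ → ℝ)
    (hG : ∀ u x y : ℝ, G (u, x, y) = g (u, y ^ 2 + u * x - x ^ 3)) :
    Tendsto (fun x : ℝ => deriv (g ∘ γ) x / deriv (f ∘ γ) x) (𝓝[≠] 0)
      (𝓝 (fderiv ℝ g (0, 0) (1, 0) / fderiv ℝ f (0, 0) (1, 0)))
    ∧ (fderiv ℝ g (0, 0) (1, 0) / fderiv ℝ f (0, 0) (1, 0) = 0 ↔
        fderiv ℝ g (0, 0) (1, 0) = 0)
    ∧ (fderiv ℝ g (0, 0) (1, 0) = 0 ↔ fderiv ℝ G (0, 0, 0) = 0) := by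
  obtain rfl : γ = cuspCurve := funext hγ
  obtain rfl : G = g ∘ cuspMap := funext fun ⟨u, x, y⟩ => hG u x y
  have h1 : (1 : WithTop ℕ∞) ≤ ((⊤ : ℕ∞) : WithTop ℕ∞) := by exact_mod_cast le_top
  exact ⟨tendsto_deriv_comp_cuspCurve_div (hf.of_le h1) (hg.of_le h1) hfs,
    div_eq_zero_iff.trans (or_iff_left hfs),
    (fderiv_comp_cuspMap_zero_eq_zero_iff (hg.differentiable (by simp) _)).symm⟩
end
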